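/- Suppose T ≥ 2 and ‖φ_t^i‖ ≤ 1 for all t = 1,…,T and i = 1,…,N. Let ρ = 2 log T (natural logarithm) and ρ* = ρ/(ρ−1). Then R̂(F_{ρ*}) ≤ (2/(T√N)) · √( 2 e R log T ). -/

import Mathlib

open scoped BigOperators
open RealInnerProductSpace

noncomputable section

/-- The sign `+1`/`-1` associated with a Boolean, used to realize Rademacher variables. -/
def sgn (b : Bool) : ℝ := if b then 1 else -1

/-- Expectation over i.i.d. Rademacher variables `σ_t^i` (`t = 1,…,T`, `i = 1,…,N`),
realized as the uniform average over all sign patterns. -/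
def Eσ (T N : ℕ) (f : (Fin T → Fin N → Bool) → ℝ) : ℝ :=
  (∑ σ : Fin T → Fin N → Bool, f σ) / (Fintype.card (Fin T → Fin N → Bool) : ℝ)

/-- The hypothesis class `F_s`: tuples `(w_1,…,w_T)` such that there is `λ ⪰ 0` with
`‖λ‖_s ≤ 1` and `‖w_t‖² ≤ λ_t² R` for all `t`. -/
def Fs (H : Type*) [NormedAddCommGroup H] [InnerProductSpace ℝ H]
    (T : ℕ) (s R : ℝ) : Set (Fin T → H) :=
  {w | ∃ lam : Fin T → ℝ, (∀ t, 0 ≤ lam t) ∧ (∑ t, lam t ^ s) ≤ 1 ∧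
    ∀ t, ‖w t‖ ^ 2 ≤ lam t ^ 2 * R}

/-- Empirical Rademacher complexity of a class `F ⊆ H^T` of weight tuples, with respect to
the sampled feature vectors `φ_t^i`. -/
def ERC {H : Type*} [NormedAddCommGroup H] [InnerProductSpace ℝ H]
    (T N : ℕ) (φ : Fin T → Fin N → H) (F : Set (Fin T → H)) : ℝ :=
  Eσ T N (fun σ => sSup {v : ℝ | ∃ w ∈ F,
    v = (2 / ((T : ℝ) * N)) * ∑ t, ∑ i, sgn (σ t i) * ⟪w t, φ t i⟫})

/-! Hölder's inequality over the tasks bounds the supremum over `F_{ρ*}` by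
`√R (∑_t ‖∑_i σ_t^i φ_t^i‖^ρ)^{1/ρ}`, and Jensen's inequality moves the expectation inside the
`1/ρ`-th power. In any inner product space `cosh ‖a + b‖ + cosh ‖a - b‖ ≤ 2 cosh ‖a‖ cosh ‖b‖`
(by convexity of `t ↦ cosh √t`), so a Rademacher sum of vectors of norm at most `1` has
`E cosh (L ‖∑_i σ_i x_i‖) ≤ exp (N L² / 2)`, whence `E ‖∑_i σ_i x_i‖^ρ ≤ 2 (ρN/e)^{ρ/2}`.
Summing over the `T = e^{ρ/2}` tasks and taking the `ρ`-th root costs only `(2T)^{1/ρ} ≤ e`. -/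

open Real

section

variable {H : Type*} [NormedAddCommGroup H] [InnerProductSpace ℝ H]

lemma convexOn_cosh_sqrt : ConvexOn ℝ (Set.Ici 0) (fun t => cosh √t) := by
  have hsinh : ConvexOn ℝ (Set.Ici 0) sinh := by
    refine MonotoneOn.convexOn_of_deriv (convex_Ici 0) continuous_sinh.continuousOn
      differentiable_sinh.differentiableOn ?_
    intro x hx y hy hxy
    rw [interior_Ici, Set.mem_Ioi] at hx hy
    simpa only [Real.deriv_sinh, cosh_le_cosh, abs_of_pos hx, abs_of_pos hy]
  have hderiv (t : ℝ) (ht : 0 < t) :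
      HasDerivAt (fun t => cosh √t) (sinh √t / √t / 2) t := by
    convert (hasDerivAt_sqrt ht.ne').cosh using 1
    field_simp
  refine MonotoneOn.convexOn_of_deriv (convex_Ici 0)
    (continuous_cosh.comp continuous_sqrt).continuousOn ?_ ?_ <;> rw [interior_Ici]
  · exact fun t ht => (hderiv t ht).differentiableAt.differentiableWithinAt
  · intro x hx y hy hxy
    rw [(hderiv x hx).deriv, (hderiv y hy).deriv]
    have hx' : 0 < √x := sqrt_pos.2 hx
    have hy' : 0 < √y := sqrt_pos.2 hy
    -- `s ↦ sinh s / s` is the slope of a secant of the convex function `sinh` through `0`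
    have := hsinh.secant_mono Set.self_mem_Ici hx'.le hy'.le hx'.ne' hy'.ne' (sqrt_le_sqrt hxy)
    simp only [sinh_zero, sub_zero] at this
    gcongr

lemma cosh_sqrt_add_add_cosh_sqrt_sub_le {u v w : ℝ} (hvw : |v| ≤ w) (hwu : w ≤ u) :
    cosh √(u + v) + cosh √(u - v) ≤ cosh √(u + w) + cosh √(u - w) := by
  set g : ℝ → ℝ := fun c => cosh √(u + c) + cosh √(u - c)
  have hg : ConvexOn ℝ (Set.Icc (-w) w) g := by
    refine ⟨convex_Icc _ _, fun x hx y hy a b ha hb hab => ?_⟩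
    have hmem : ∀ c ∈ Set.Icc (-w) w, u + c ∈ Set.Ici (0 : ℝ) ∧ u - c ∈ Set.Ici (0 : ℝ) :=
      fun c hc => ⟨by simp only [Set.mem_Ici]; linarith [hc.1],
        by simp only [Set.mem_Ici]; linarith [hc.2]⟩
    have hplus := convexOn_cosh_sqrt.2 (hmem x hx).1 (hmem y hy).1 ha hb hab
    have hminus := convexOn_cosh_sqrt.2 (hmem x hx).2 (hmem y hy).2 ha hb hab
    have eplus : a * (u + x) + b * (u + y) = u + (a * x + b * y) := by
      linear_combination u * hab
    have eminus : a * (u - x) + b * (u - y) = u - (a * x + b * y) := by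
      linear_combination u * hab
    simp only [g, smul_eq_mul] at hplus hminus ⊢
    rw [eplus] at hplus
    rw [eminus] at hminus
    linarith
  -- `g` is convex and even on `[-w, w]`, hence maximal at the endpoints
  have hw : 0 ≤ w := (abs_nonneg v).trans hvw
  have hv : v ∈ segment ℝ (-w) w := by
    rw [segment_eq_Icc (by linarith)]
    exact abs_le.1 hvw
  have := hg.le_on_segment (Set.left_mem_Icc.2 (by linarith)) (Set.right_mem_Icc.2 (by linarith))
    hv
  simpa only [g, sub_neg_eq_add, ← sub_eq_add_neg, add_comm, max_self] using this

lemma cosh_norm_add_add_cosh_norm_sub_le (a b : H) :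
    cosh ‖a + b‖ + cosh ‖a - b‖ ≤ 2 * cosh ‖a‖ * cosh ‖b‖ := by
  have key := cosh_sqrt_add_add_cosh_sqrt_sub_le (u := ‖a‖ ^ 2 + ‖b‖ ^ 2)
    (v := 2 * ⟪a, b⟫) (w := 2 * (‖a‖ * ‖b‖))
    (by rw [abs_mul, abs_two]; gcongr; exact abs_real_inner_le_norm a b)
    (by nlinarith [sq_nonneg (‖a‖ - ‖b‖)])
  have hplus : ‖a‖ ^ 2 + ‖b‖ ^ 2 + 2 * ⟪a, b⟫ = ‖a + b‖ ^ 2 := by rw [norm_add_sq_real]; ring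
  have hminus : ‖a‖ ^ 2 + ‖b‖ ^ 2 - 2 * ⟪a, b⟫ = ‖a - b‖ ^ 2 := by rw [norm_sub_sq_real]; ring
  rw [hplus, hminus, show ‖a‖ ^ 2 + ‖b‖ ^ 2 + 2 * (‖a‖ * ‖b‖) = (‖a‖ + ‖b‖) ^ 2 by ring,
    show ‖a‖ ^ 2 + ‖b‖ ^ 2 - 2 * (‖a‖ * ‖b‖) = (‖a‖ - ‖b‖) ^ 2 by ring,
    sqrt_sq (norm_nonneg _), sqrt_sq (norm_nonneg _), sqrt_sq (by positivity),
    sqrt_sq_eq_abs, cosh_abs, cosh_add, cosh_sub] at key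
  linarith

def signedSum {n : ℕ} (x : Fin n → H) (τ : Fin n → Bool) : H := ∑ i, sgn (τ i) • x i

lemma signedSum_cons {n : ℕ} (x : Fin (n + 1) → H) (b : Bool) (τ : Fin n → Bool) :
    signedSum x (Fin.cons b τ) = signedSum (Fin.tail x) τ + sgn b • x 0 := by
  simp only [signedSum, Fin.sum_univ_succ, Fin.cons_zero, Fin.cons_succ, Fin.tail]
  abel

lemma sum_cosh_norm_signedSum_le {n : ℕ} (x : Fin n → H) :
    ∑ τ, cosh ‖signedSum x τ‖ ≤ 2 ^ n * ∏ i, cosh ‖x i‖ := by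
  induction n with
  | zero => simp [signedSum]
  | succ n ih =>
    rw [← (Fin.consEquiv fun _ => Bool).sum_comp, Fintype.sum_prod_type, Finset.sum_comm,
      Fin.prod_univ_succ]
    calc ∑ τ : Fin n → Bool, ∑ b, cosh ‖signedSum x (Fin.cons b τ)‖
        ≤ ∑ τ, 2 * cosh ‖signedSum (Fin.tail x) τ‖ * cosh ‖x 0‖ := by
          gcongr with τ
          simpa [signedSum_cons, sgn, ← sub_eq_add_neg] using
            cosh_norm_add_add_cosh_norm_sub_le (signedSum (Fin.tail x) τ) (x 0)
      _ = 2 * cosh ‖x 0‖ * ∑ τ, cosh ‖signedSum (Fin.tail x) τ‖ := by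
          rw [Finset.mul_sum]; exact Finset.sum_congr rfl fun τ _ => by ring
      _ ≤ 2 * cosh ‖x 0‖ * (2 ^ n * ∏ i, cosh ‖Fin.tail x i‖) := by
          gcongr; exact ih _
      _ = 2 ^ (n + 1) * (cosh ‖x 0‖ * ∏ i : Fin n, cosh ‖x i.succ‖) := by
          simp only [Fin.tail]; ring

lemma rpow_le_mul_exp {y p L : ℝ} (hy : 0 ≤ y) (hp : 0 < p) (hL : 0 < L) :
    y ^ p ≤ (p / (exp 1 * L)) ^ p * exp (L * y) := by
  have h : y ≤ p / (exp 1 * L) * exp (L * y / p) := by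
    have := add_one_le_exp (L * y / p - 1)
    rw [sub_add_cancel, exp_sub] at this
    calc y = p / L * (L * y / p) := by field_simp
      _ ≤ p / L * (exp (L * y / p) / exp 1) := by gcongr
      _ = p / (exp 1 * L) * exp (L * y / p) := by field_simp
  calc y ^ p ≤ (p / (exp 1 * L) * exp (L * y / p)) ^ p := rpow_le_rpow hy h hp.le
    _ = (p / (exp 1 * L)) ^ p * exp (L * y) := by
      rw [mul_rpow (by positivity) (exp_pos _).le, ← exp_mul]
      field_simp

lemma sum_norm_signedSum_rpow_le {n : ℕ} (hn : 0 < n) (x : Fin n → H) (hx : ∀ i, ‖x i‖ ≤ 1)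
    {p : ℝ} (hp : 0 < p) :
    ∑ τ, ‖signedSum x τ‖ ^ p ≤ 2 ^ n * (2 * (p * n / exp 1) ^ (p / 2)) := by
  -- `L = √(p / n)` minimizes `L ^ (-p) * exp (n * L ^ 2 / 2)`
  set L := √(p / n)
  have hL : 0 < L := sqrt_pos.2 (by positivity)
  have hL2 : L ^ 2 = p / n := sq_sqrt (by positivity)
  have hcosh : ∑ τ, cosh (L * ‖signedSum x τ‖) ≤ 2 ^ n * exp (p / 2) := by
    calc ∑ τ, cosh (L * ‖signedSum x τ‖) = ∑ τ, cosh ‖signedSum (L • x) τ‖ := by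
          simp only [signedSum, Pi.smul_apply, smul_comm _ L, ← Finset.smul_sum, norm_smul,
            norm_of_nonneg hL.le]
      _ ≤ 2 ^ n * ∏ i, cosh ‖(L • x) i‖ := sum_cosh_norm_signedSum_le _
      _ ≤ 2 ^ n * ∏ _i : Fin n, exp (L ^ 2 / 2) := by
          gcongr with i
          refine (cosh_le_cosh.2 ?_).trans (cosh_le_exp_half_sq L)
          rw [Pi.smul_apply, norm_smul, norm_of_nonneg hL.le, abs_mul, abs_of_nonneg hL.le,
            abs_norm]
          exact mul_le_of_le_one_right hL.le (hx i)
      _ = 2 ^ n * exp (p / 2) := by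
          rw [Finset.prod_const, Finset.card_univ, Fintype.card_fin, ← exp_nat_mul, hL2]
          field_simp
  have hC : (p / (exp 1 * L)) ^ p * exp (p / 2) = (p * n / exp 1) ^ (p / 2) := by
    have hsq : (p / (exp 1 * L)) ^ (2 : ℝ) = p * n / exp 1 ^ 2 := by
      rw [rpow_two, div_pow, mul_pow, hL2]; field_simp
    have hpow : (p / (exp 1 * L)) ^ p = ((p / (exp 1 * L)) ^ (2 : ℝ)) ^ (p / 2) := by
      rw [← rpow_mul (by positivity)]; ring_nf
    rw [hpow, hsq, ← exp_one_rpow (p / 2),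
      ← mul_rpow (by positivity) (exp_pos 1).le]
    congr 1
    field_simp
  calc ∑ τ, ‖signedSum x τ‖ ^ p
      ≤ ∑ τ, (p / (exp 1 * L)) ^ p * (2 * cosh (L * ‖signedSum x τ‖)) := by
        gcongr with τ
        refine (rpow_le_mul_exp (norm_nonneg _) hp hL).trans ?_
        gcongr
        rw [cosh_eq]
        linarith [exp_pos (-(L * ‖signedSum x τ‖))]
    _ = 2 * (p / (exp 1 * L)) ^ p * ∑ τ, cosh (L * ‖signedSum x τ‖) := by
        rw [Finset.mul_sum]; exact Finset.sum_congr rfl fun τ _ => by ring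
    _ ≤ 2 * (p / (exp 1 * L)) ^ p * (2 ^ n * exp (p / 2)) := by gcongr
    _ = 2 ^ n * (2 * (p * n / exp 1) ^ (p / 2)) := by rw [← hC]; ring

lemma sum_inner_le_of_mem_Fs {T : ℕ} {p q R : ℝ} (hpq : p.HolderConjugate q) {w : Fin T → H}
    (hw : w ∈ Fs H T p R) (v : Fin T → H) :
    ∑ t, ⟪w t, v t⟫ ≤ √R * (∑ t, ‖v t‖ ^ q) ^ (1 / q) := by
  obtain ⟨lam, hlam0, hlam, hwR⟩ := hw
  have hwt (t : Fin T) : ‖w t‖ ≤ lam t * √R := by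
    rw [← sqrt_sq (hlam0 t), ← sqrt_mul (sq_nonneg _)]
    exact le_sqrt_of_sq_le (hwR t)
  calc ∑ t, ⟪w t, v t⟫ ≤ ∑ t, lam t * √R * ‖v t‖ := by
        gcongr with t
        exact (real_inner_le_norm _ _).trans (by gcongr; exact hwt t)
    _ = √R * ∑ t, lam t * ‖v t‖ := by
        rw [Finset.mul_sum]; exact Finset.sum_congr rfl fun t _ => by ring
    _ ≤ √R * ((∑ t, lam t ^ p) ^ (1 / p) * (∑ t, ‖v t‖ ^ q) ^ (1 / q)) := by
        gcongr
        exact inner_le_Lp_mul_Lq_of_nonneg _ hpq (fun t _ => hlam0 t) (fun t _ => norm_nonneg _)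
    _ ≤ √R * (1 * (∑ t, ‖v t‖ ^ q) ^ (1 / q)) := by
        gcongr
        exact rpow_le_one (Finset.sum_nonneg fun t _ => rpow_nonneg (hlam0 t) _) hlam
          (one_div_nonneg.2 hpq.nonneg)
    _ = √R * (∑ t, ‖v t‖ ^ q) ^ (1 / q) := by rw [one_mul]

lemma sSup_correlation_Fs_le {T N : ℕ} {p q R c : ℝ} (hpq : p.HolderConjugate q) (hc : 0 ≤ c)
    (φ : Fin T → Fin N → H) (σ : Fin T → Fin N → Bool) :
    sSup {v : ℝ | ∃ w ∈ Fs H T p R, v = c * ∑ t, ∑ i, sgn (σ t i) * ⟪w t, φ t i⟫} ≤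
      c * (√R * (∑ t, ‖signedSum (φ t) (σ t)‖ ^ q) ^ (1 / q)) := by
  refine Real.sSup_le ?_ (by positivity)
  rintro _ ⟨w, hw, rfl⟩
  have hinner (t : Fin T) :
      ∑ i, sgn (σ t i) * ⟪w t, φ t i⟫ = ⟪w t, signedSum (φ t) (σ t)⟫ := by
    simp only [signedSum, inner_sum, real_inner_smul_right]
  simp only [hinner]
  gcongr
  exact sum_inner_le_of_mem_Fs hpq hw _

section Rademacher

variable {T N : ℕ}

lemma Eσ_mono {f g : (Fin T → Fin N → Bool) → ℝ} (h : ∀ σ, f σ ≤ g σ) :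
    Eσ T N f ≤ Eσ T N g :=
  div_le_div_of_nonneg_right (Finset.sum_le_sum fun σ _ => h σ) (Nat.cast_nonneg _)

lemma Eσ_const_mul (c : ℝ) (f : (Fin T → Fin N → Bool) → ℝ) :
    Eσ T N (fun σ => c * f σ) = c * Eσ T N f := by
  simp only [Eσ, ← Finset.mul_sum, mul_div_assoc]

lemma Eσ_sum {ι : Type*} (s : Finset ι) (f : ι → (Fin T → Fin N → Bool) → ℝ) :
    Eσ T N (fun σ => ∑ t ∈ s, f t σ) = ∑ t ∈ s, Eσ T N (f t) := by
  simp only [Eσ, Finset.sum_comm (s := s), Finset.sum_div]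

lemma Eσ_rpow_le_rpow_Eσ {f : (Fin T → Fin N → Bool) → ℝ} (hf : ∀ σ, 0 ≤ f σ) {r : ℝ} (hr₀ : 0 ≤ r)
    (hr₁ : r ≤ 1) : Eσ T N (fun σ => f σ ^ r) ≤ Eσ T N f ^ r := by
  have hcard : (0 : ℝ) < Fintype.card (Fin T → Fin N → Bool) := Nat.cast_pos.2 Fintype.card_pos
  have := (concaveOn_rpow hr₀ hr₁).le_map_sum (t := Finset.univ)
    (w := fun _ => (Fintype.card (Fin T → Fin N → Bool) : ℝ)⁻¹) (p := f)
    (fun _ _ => inv_nonneg.2 hcard.le) (by simp) (fun σ _ => hf σ)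
  simpa only [Eσ, smul_eq_mul, inv_mul_eq_div, Finset.sum_div] using this

lemma Eσ_comp_eval (t : Fin T) (g : (Fin N → Bool) → ℝ) :
    Eσ T N (fun σ => g (σ t)) = (∑ τ, g τ) / 2 ^ N := by
  rw [Eσ, Fintype.sum_equiv (Equiv.funSplitAt t _) (fun σ => g (σ t)) (fun x => g x.1)
    fun σ => rfl, Fintype.card_congr (Equiv.funSplitAt t _), Fintype.sum_prod_type]
  simp only [Finset.sum_const, Finset.card_univ, nsmul_eq_mul, Fintype.card_prod]
  rw [← Finset.mul_sum, Nat.cast_mul, mul_comm (_ : ℝ),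
    mul_div_mul_right _ _ (Nat.cast_ne_zero.2 Fintype.card_ne_zero)]
  simp

end Rademacher

lemma Eσ_sum_norm_signedSum_rpow_le {T N : ℕ} (hN : 0 < N) (φ : Fin T → Fin N → H)
    (hφ : ∀ t i, ‖φ t i‖ ≤ 1) {p : ℝ} (hp : 0 < p) :
    Eσ T N (fun σ => ∑ t, ‖signedSum (φ t) (σ t)‖ ^ p) ≤ T * (2 * (p * N / exp 1) ^ (p / 2)) := by
  rw [Eσ_sum]
  calc ∑ t, Eσ T N (fun σ => ‖signedSum (φ t) (σ t)‖ ^ p)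
      ≤ ∑ _t : Fin T, 2 * (p * N / exp 1) ^ (p / 2) := by
        gcongr with t
        rw [Eσ_comp_eval t fun τ => ‖signedSum (φ t) τ‖ ^ p, div_le_iff₀ (by positivity),
          mul_comm]
        exact sum_norm_signedSum_rpow_le hN (φ t) (hφ t) hp
    _ = T * (2 * (p * N / exp 1) ^ (p / 2)) := by simp

lemma rpow_one_div_le_exp_one_mul_sqrt {T ρ M : ℝ} (hT : 2 ≤ T) (hρ : ρ = 2 * log T)
    (hM : 0 ≤ M) : (2 * T * M ^ (ρ / 2)) ^ (1 / ρ) ≤ exp 1 * √M := by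
  have hlog : 0 < log T := log_pos (by linarith)
  have hρ0 : 0 < ρ := by rw [hρ]; positivity
  rw [mul_rpow (by positivity) (by positivity), ← rpow_mul hM,
    show ρ / 2 * (1 / ρ) = 1 / 2 by field_simp, ← sqrt_eq_rpow]
  gcongr
  calc (2 * T) ^ (1 / ρ) ≤ (T ^ (2 : ℝ)) ^ (1 / ρ) := by
        gcongr
        rw [rpow_two]; nlinarith
    _ = exp 1 := by
        rw [← rpow_mul (by positivity), hρ, show 2 * (1 / (2 * log T)) = (log T)⁻¹ by field_simp,
          rpow_inv_log (by positivity) (by linarith)]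


lemma two_div_mul_sqrt_mul_rpow_le {T N R ρ : ℝ} (hT : 2 ≤ T) (hN : 0 < N)
    (hρ : ρ = 2 * log T) :
    2 / (T * N) * √R * (T * (2 * (ρ * N / exp 1) ^ (ρ / 2))) ^ (1 / ρ) ≤
      2 / (T * √N) * √(2 * exp 1 * R * log T) := by
  have hρ0 : 0 < ρ := by rw [hρ]; exact mul_pos two_pos (log_pos (by linarith))
  calc 2 / (T * N) * √R * (T * (2 * (ρ * N / exp 1) ^ (ρ / 2))) ^ (1 / ρ)
      ≤ 2 / (T * N) * √R * (exp 1 * √(ρ * N / exp 1)) := by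
        gcongr
        rw [← mul_assoc, mul_comm T]
        exact rpow_one_div_le_exp_one_mul_sqrt hT hρ (by positivity)
    _ = 2 / (T * √N) * √(2 * exp 1 * R * log T) := by
        rw [show 2 * exp 1 * R * log T = exp 1 * ρ * R by rw [hρ]; ring,
          sqrt_mul (by positivity) R, sqrt_mul (exp_pos 1).le, sqrt_div' _ (exp_pos 1).le,
          sqrt_mul hρ0.le]
        field_simp
        rw [sq_sqrt hN.le, sq_sqrt (exp_pos 1).le]
        ring

end

theorem erc_Fs_rhoStar_bound_general {H : Type*} [NormedAddCommGroup H] [InnerProductSpace ℝ H]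
    (T N : ℕ) (hT : 2 ≤ T) (hN : 0 < N) (R : ℝ)
    (φ : Fin T → Fin N → H) (hφ : ∀ t i, ‖φ t i‖ ≤ 1)
    (ρ : ℝ) (hρ : ρ = 2 * Real.log T) :
    ERC T N φ (Fs H T (ρ / (ρ - 1)) R) ≤
      (2 / ((T : ℝ) * Real.sqrt N)) *
        Real.sqrt (2 * Real.exp 1 * R * Real.log T) := by
  have hT' : (2 : ℝ) ≤ T := by exact_mod_cast hT
  have hρ1 : 1 < ρ := by rw [hρ]; linarith [log_two_gt_d9, log_le_log two_pos hT']
  set c := 2 / ((T : ℝ) * N)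
  set Y := fun σ : Fin T → Fin N → Bool => ∑ t, ‖signedSum (φ t) (σ t)‖ ^ ρ
  have hY (σ) : 0 ≤ Y σ := Finset.sum_nonneg fun t _ => rpow_nonneg (norm_nonneg _) _
  calc ERC T N φ (Fs H T (ρ / (ρ - 1)) R)
      ≤ Eσ T N (fun σ => c * √R * Y σ ^ (1 / ρ)) := Eσ_mono fun σ =>
        (sSup_correlation_Fs_le (Real.HolderConjugate.conjExponent hρ1).symm (by positivity)
          φ σ).trans_eq (mul_assoc _ _ _).symm
    _ = c * √R * Eσ T N (fun σ => Y σ ^ (1 / ρ)) := Eσ_const_mul _ _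
    _ ≤ c * √R * Eσ T N Y ^ (1 / ρ) := by
        gcongr
        exact Eσ_rpow_le_rpow_Eσ hY (by positivity) ((div_le_one (by linarith)).2 hρ1.le)
    _ ≤ c * √R * (T * (2 * (ρ * N / exp 1) ^ (ρ / 2))) ^ (1 / ρ) := by
        gcongr
        · exact div_nonneg (Finset.sum_nonneg fun σ _ => hY σ) (Nat.cast_nonneg _)
        · exact Eσ_sum_norm_signedSum_rpow_le hN φ hφ (by linarith)
    _ ≤ 2 / (T * √N) * √(2 * exp 1 * R * log T) :=
        two_div_mul_sqrt_mul_rpow_le hT' (Nat.cast_pos.2 hN) hρ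

/-- If `T ≥ 2` and `‖φ_t^i‖ ≤ 1` for all `t, i`, then with
`ρ = 2 log T` and `ρ* = ρ/(ρ-1)`, `R̂(F_{ρ*}) ≤ (2/(T√N)) √(2eR log T)`. -/
theorem erc_Fs_rhoStar_bound {H : Type*} [NormedAddCommGroup H] [InnerProductSpace ℝ H]
    (T N : ℕ) (hT : 2 ≤ T) (hN : 0 < N) (R : ℝ) (hR : 0 < R)
    (φ : Fin T → Fin N → H) (hφ : ∀ t i, ‖φ t i‖ ≤ 1)
    (ρ : ℝ) (hρ : ρ = 2 * Real.log T) :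
    ERC T N φ (Fs H T (ρ / (ρ - 1)) R) ≤
      (2 / ((T : ℝ) * Real.sqrt N)) *
        Real.sqrt (2 * Real.exp 1 * R * Real.log T) :=
  erc_Fs_rhoStar_bound_general T N hT hN R φ hφ ρ hρ

end
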